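/- arXiv:2304.08424 — 2 statements merged into one kernel-verified Lean document; each statement's English description precedes it below -/
import Mathlib

section
/- Let M_Θ be the block matrix with blocks M^{(j)} = C(A^{j+1} - A^j)B for 1 ≤ j ≤ k-1, M^{(x')} = C(A-I)B - D, M^{(x)} = CB + D, and M^{(y)} = I_{m×m}, where 0 ⪯ A ⪯ γ·I with γ < 1 and ‖B‖_F, ‖C‖_F, ‖D‖_F ≤ c. Then ‖M_Θ‖_F² ≤ (c⁴ + 2c² + √m)² · (1 + ∑_{j=0}^{k} γ^{2j}), and in particular ‖M_Θ‖_F is bounded by a constant independent of k. -/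
noncomputable def fnorm {m n : ℕ} (M : Matrix (Fin m) (Fin n) ℝ) : ℝ :=
  Real.sqrt (∑ i, ∑ j, M i j ^ 2)

/-- Squared Frobenius norm of the block matrix `M_Θ`, equal to the sum of the
squared Frobenius norms of its blocks
`M^{(j)} = C(A^{j+1}-A^j)B` for `1 ≤ j ≤ k-1`, `M^{(x')} = C(A-I)B - D`,
`M^{(x)} = CB + D`, and `M^{(y)} = I_{m×m}`. -/
noncomputable def blockFrobSq {d n m : ℕ}
    (A : Matrix (Fin d) (Fin d) ℝ) (B : Matrix (Fin d) (Fin n) ℝ)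
    (C : Matrix (Fin m) (Fin d) ℝ) (D : Matrix (Fin m) (Fin n) ℝ) (k : ℕ) : ℝ :=
  (∑ j ∈ Finset.Icc 1 (k - 1), fnorm (C * (A ^ (j + 1) - A ^ j) * B) ^ 2)
    + fnorm (C * (A - 1) * B - D) ^ 2
    + fnorm (C * B + D) ^ 2
    + fnorm (1 : Matrix (Fin m) (Fin m) ℝ) ^ 2

section Aux
open Matrix Finset

variable {d : ℕ}

lemma psd_dot {X : Matrix (Fin d) (Fin d) ℝ} (hX : X.PosSemidef) (x : Fin d → ℝ) :
    0 ≤ x ⬝ᵥ X *ᵥ x := by simpa using hX.dotProduct_mulVec_nonneg x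

lemma herm_dot {X : Matrix (Fin d) (Fin d) ℝ} (hX : X.IsHermitian) (u v : Fin d → ℝ) :
    u ⬝ᵥ X *ᵥ v = v ⬝ᵥ X *ᵥ u := by
  simp only [dotProduct, Matrix.mulVec, dotProduct, Finset.mul_sum]
  rw [Finset.sum_comm]
  refine Finset.sum_congr rfl fun i _ => Finset.sum_congr rfl fun j _ => ?_
  have := hX.apply i j
  simp only [star_trivial] at this
  rw [← this]
  ring

lemma cs_dot {X : Matrix (Fin d) (Fin d) ℝ} (hX : X.PosSemidef) (u v : Fin d → ℝ) :
    (u ⬝ᵥ X *ᵥ v)^2 ≤ (u ⬝ᵥ X *ᵥ u) * (v ⬝ᵥ X *ᵥ v) := by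
  have key : ∀ t : ℝ, 0 ≤ (u ⬝ᵥ X *ᵥ u) * (t*t) + (2 * (u ⬝ᵥ X *ᵥ v)) * t + (v ⬝ᵥ X *ᵥ v) := by
    intro t
    have h := psd_dot hX (t • u + v)
    have expand : (t • u + v) ⬝ᵥ X *ᵥ (t • u + v)
        = (u ⬝ᵥ X *ᵥ u) * (t*t) + (2 * (u ⬝ᵥ X *ᵥ v)) * t + (v ⬝ᵥ X *ᵥ v) := by
      simp only [Matrix.mulVec_add, Matrix.mulVec_smul, dotProduct_add,
        add_dotProduct, dotProduct_smul, smul_dotProduct, smul_eq_mul,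
        herm_dot hX.1 v u]
      ring
    linarith [expand ▸ h]
  have hd := discrim_le_zero key
  rw [discrim] at hd
  nlinarith [hd]

lemma smul_one_dot (α : ℝ) (u v : Fin d → ℝ) :
    u ⬝ᵥ (α • (1 : Matrix (Fin d) (Fin d) ℝ)) *ᵥ v = α * (u ⬝ᵥ v) := by
  simp [Matrix.smul_mulVec, dotProduct_smul, smul_eq_mul]

lemma psd_smul {X : Matrix (Fin d) (Fin d) ℝ} (hX : X.PosSemidef) {α : ℝ} (hα : 0 ≤ α) :
    (α • X).PosSemidef := by
  exact hX.smul hα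

lemma op_dot {X : Matrix (Fin d) (Fin d) ℝ} {α : ℝ}
    (hP : (α • (1 : Matrix (Fin d) (Fin d) ℝ) - X).PosSemidef)
    (hQ : (α • (1 : Matrix (Fin d) (Fin d) ℝ) + X).PosSemidef)
    (u v : Fin d → ℝ) :
    (u ⬝ᵥ X *ᵥ v)^2 ≤ α^2 * ((u ⬝ᵥ u) * (v ⬝ᵥ v)) := by
  set Y := α • (1 : Matrix (Fin d) (Fin d) ℝ) - X with hY
  set Z := α • (1 : Matrix (Fin d) (Fin d) ℝ) + X with hZ
  have split : ∀ w w' : Fin d → ℝ,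
      w ⬝ᵥ Y *ᵥ w' + w ⬝ᵥ Z *ᵥ w' = 2 * α * (w ⬝ᵥ w') ∧
      w ⬝ᵥ Z *ᵥ w' - w ⬝ᵥ Y *ᵥ w' = 2 * (w ⬝ᵥ X *ᵥ w') := by
    intro w w'
    simp only [hY, hZ, Matrix.sub_mulVec, Matrix.add_mulVec, dotProduct_sub,
      dotProduct_add, smul_one_dot]
    constructor <;> ring
  obtain ⟨hu1, -⟩ := split u u
  obtain ⟨hv1, -⟩ := split v v
  obtain ⟨-, huv⟩ := split u v
  have hp := psd_dot hP u
  have hq := psd_dot hQ u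
  have hr := psd_dot hP v
  have hs := psd_dot hQ v
  have h1 := cs_dot hP u v
  have h2 := cs_dot hQ u v
  set y := u ⬝ᵥ Y *ᵥ v
  set z := u ⬝ᵥ Z *ᵥ v
  set p := u ⬝ᵥ Y *ᵥ u
  set q := u ⬝ᵥ Z *ᵥ u
  set r := v ⬝ᵥ Y *ᵥ v
  set s := v ⬝ᵥ Z *ᵥ v
  have key : 0 ≤ p*s + q*r + 2*(y*z) := by
    nlinarith [sq_nonneg (p*s - q*r), mul_le_mul h1 h2 (sq_nonneg z) (mul_nonneg hp hr),
      sq_nonneg (y*z), mul_nonneg hp hs, mul_nonneg hq hr, sq_nonneg (p*s+q*r+2*(y*z))]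
  have h3 : (z - y)^2 ≤ (p+q)*(r+s) := by nlinarith [key, h1, h2]
  have h4 : (p+q)*(r+s) = 4*(α^2*((u ⬝ᵥ u) * (v ⬝ᵥ v))) := by rw [hu1, hv1]; ring
  have h5 : (z-y)^2 = 4*(u ⬝ᵥ X *ᵥ v)^2 := by rw [huv]; ring
  linarith [h3, h4 ▸ h3, h5]

lemma fnorm_nonneg {m n : ℕ} (M : Matrix (Fin m) (Fin n) ℝ) : 0 ≤ fnorm M :=
  Real.sqrt_nonneg _

lemma fnorm_sq {m n : ℕ} (M : Matrix (Fin m) (Fin n) ℝ) :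
    fnorm M ^ 2 = ∑ i, ∑ j, M i j ^ 2 :=
  Real.sq_sqrt (by positivity)

lemma numeric_h2K {c s : ℝ} (hc : 0 ≤ c) (hs1 : 1 ≤ s) :
    2 * (c ^ 2 + c) ^ 2 + s ^ 2 ≤ 2 * (c ^ 4 + 2 * c ^ 2 + s) ^ 2 := by
  nlinarith [sq_nonneg (c^2 - c), pow_nonneg hc 4, pow_nonneg hc 3, pow_nonneg hc 2,
    mul_nonneg (pow_nonneg hc 2) (by linarith : (0:ℝ) ≤ s - 1),
    mul_nonneg (pow_nonneg hc 4) (by linarith : (0:ℝ) ≤ s - 1),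
    mul_nonneg hc (by linarith : (0:ℝ) ≤ s - 1),
    mul_nonneg (by linarith : (0:ℝ) ≤ s - 1) (by linarith : (0:ℝ) ≤ s - 1),
    sq_nonneg c, sq_nonneg (c^2), sq_nonneg s]

lemma le_of_sq_le_sq' {a b : ℝ} (hb : 0 ≤ b) (h : a ^ 2 ≤ b ^ 2) (ha : 0 ≤ a) : a ≤ b := by
  nlinarith

lemma fnorm_triple {n m : ℕ} {X : Matrix (Fin d) (Fin d) ℝ} {α : ℝ}
    (hP : (α • (1 : Matrix (Fin d) (Fin d) ℝ) - X).PosSemidef)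
    (hQ : (α • (1 : Matrix (Fin d) (Fin d) ℝ) + X).PosSemidef)
    (C : Matrix (Fin m) (Fin d) ℝ) (B : Matrix (Fin d) (Fin n) ℝ) :
    fnorm (C * X * B) ^ 2 ≤ α^2 * (fnorm C ^ 2 * fnorm B ^ 2) := by
  rw [fnorm_sq, fnorm_sq, fnorm_sq]
  have entry : ∀ (i : Fin m) (l : Fin n),
      (C * X * B) i l = (fun p => C i p) ⬝ᵥ X *ᵥ (fun q => B q l) := by
    intro i l
    simp only [Matrix.mul_apply, dotProduct, Matrix.mulVec, dotProduct,
      Finset.mul_sum, Finset.sum_mul]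
    rw [Finset.sum_comm]
    exact Finset.sum_congr rfl fun q _ => Finset.sum_congr rfl fun p _ => by ring
  have step : ∀ (i : Fin m) (l : Fin n),
      (C * X * B) i l ^ 2 ≤ α^2 * ((∑ p, C i p ^ 2) * (∑ q, B q l ^ 2)) := by
    intro i l
    rw [entry i l]
    have := op_dot hP hQ (fun p => C i p) (fun q => B q l)
    simpa [dotProduct, sq] using this
  calc ∑ i, ∑ l, (C * X * B) i l ^ 2
      ≤ ∑ i, ∑ l, α^2 * ((∑ p, C i p ^ 2) * (∑ q, B q l ^ 2)) :=
        Finset.sum_le_sum fun i _ => Finset.sum_le_sum fun l _ => step i l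
    _ = α^2 * ((∑ i, ∑ p, C i p ^ 2) * (∑ l, ∑ q, B q l ^ 2)) := by
        simp only [← Finset.mul_sum, ← Finset.sum_mul]
    _ = α^2 * ((∑ i, ∑ p, C i p ^ 2) * (∑ q, ∑ l, B q l ^ 2)) := by
        rw [Finset.sum_comm (f := fun l q => B q l ^ 2)]

lemma fnorm_add_le {m n : ℕ} (M N : Matrix (Fin m) (Fin n) ℝ) :
    fnorm (M + N) ≤ fnorm M + fnorm N := by
  have hcs : (∑ i, ∑ j, M i j * N i j) ≤ fnorm M * fnorm N := by
    have h := Finset.sum_mul_sq_le_sq_mul_sq Finset.univ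
      (fun p : Fin m × Fin n => M p.1 p.2) (fun p : Fin m × Fin n => N p.1 p.2)
    rw [Fintype.sum_prod_type, Fintype.sum_prod_type, Fintype.sum_prod_type] at h
    have h2 : (∑ i, ∑ j, M i j * N i j) ^ 2 ≤ (fnorm M * fnorm N) ^ 2 := by
      rw [mul_pow, fnorm_sq, fnorm_sq]; exact h
    nlinarith [h2, mul_nonneg (fnorm_nonneg M) (fnorm_nonneg N)]
  have hexp : fnorm (M + N) ^ 2
      = fnorm M ^ 2 + 2 * (∑ i, ∑ j, M i j * N i j) + fnorm N ^ 2 := by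
    rw [fnorm_sq, fnorm_sq, fnorm_sq]
    simp only [Matrix.add_apply, add_sq, Finset.sum_add_distrib, Finset.mul_sum, mul_assoc]
  refine le_of_sq_le_sq' (add_nonneg (fnorm_nonneg M) (fnorm_nonneg N)) ?_ (fnorm_nonneg _)
  rw [hexp, add_sq]
  nlinarith [hcs]

lemma fnorm_neg {m n : ℕ} (N : Matrix (Fin m) (Fin n) ℝ) : fnorm (-N) = fnorm N := by
  unfold fnorm
  congr 1
  refine Finset.sum_congr rfl fun i _ => Finset.sum_congr rfl fun j _ => ?_
  simp [Matrix.neg_apply]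

lemma fnorm_sub_le {m n : ℕ} (M N : Matrix (Fin m) (Fin n) ℝ) :
    fnorm (M - N) ≤ fnorm M + fnorm N := by
  rw [sub_eq_add_neg]
  exact (fnorm_add_le M (-N)).trans_eq (by rw [fnorm_neg])

lemma fnorm_one {m : ℕ} : fnorm (1 : Matrix (Fin m) (Fin m) ℝ) = Real.sqrt m := by
  unfold fnorm
  congr 1
  have h : ∀ i : Fin m, ∑ j, (1 : Matrix (Fin m) (Fin m) ℝ) i j ^ 2 = 1 := by
    intro i
    rw [Finset.sum_eq_single i]
    · simp [Matrix.one_apply]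
    · intro b _ hb; simp [Matrix.one_apply, (Ne.symm hb)]
    · simp
  simp [h]

open scoped MatrixOrder in
lemma psd_exists_sqrt {A : Matrix (Fin d) (Fin d) ℝ} (hA : A.PosSemidef) :
    ∃ S : Matrix (Fin d) (Fin d) ℝ, S.IsHermitian ∧ S ^ 2 = A ∧ S * S = A :=
  ⟨CFC.sqrt A, (Matrix.nonneg_iff_posSemidef.mp (CFC.sqrt_nonneg A)).1,
    CFC.sq_sqrt A hA.nonneg, CFC.sqrt_mul_sqrt_self A hA.nonneg⟩

variable {A : Matrix (Fin d) (Fin d) ℝ} {γ : ℝ}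

lemma psd_sub_pow (hA : A.PosSemidef)
    (hIA : ((1 : Matrix (Fin d) (Fin d) ℝ) - A).PosSemidef) (j : ℕ) :
    (A ^ j - A ^ (j+1)).PosSemidef := by
  obtain ⟨S, hSH, hSq, -⟩ := psd_exists_sqrt hA
  have e3 : S ^ j * S ^ j = A ^ j := by
    rw [← pow_add, show j + j = 2*j from by ring, pow_mul, hSq]
  have hAj : ∀ i : ℕ, A ^ i = S ^ (2*i) := by
    intro i; rw [pow_mul, hSq]
  have e4 : S ^ j * A * S ^ j = A ^ (j+1) := by
    rw [show A = A^1 from (pow_one A).symm, hAj 1, ← pow_mul, ← pow_add, ← pow_add]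
    congr 1; ring
  have key : A ^ j - A ^ (j+1) = S ^ j * ((1 : Matrix (Fin d) (Fin d) ℝ) - A) * S ^ j := by
    rw [Matrix.mul_sub, Matrix.mul_one, Matrix.sub_mul, e3, e4]
  rw [key]
  have := hIA.mul_mul_conjTranspose_same (S ^ j)
  rwa [(hSH.pow j).eq] at this

lemma psd_geom (hA : A.PosSemidef) (hγ0 : 0 ≤ γ)
    (hAγ : (γ • (1 : Matrix (Fin d) (Fin d) ℝ) - A).PosSemidef) (j : ℕ) :
    (γ ^ j • (1 : Matrix (Fin d) (Fin d) ℝ) - A ^ j).PosSemidef := by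
  induction j with
  | zero => simpa using Matrix.PosSemidef.zero
  | succ j ih =>
    obtain ⟨S, hSH, hSq, hSm⟩ := psd_exists_sqrt hA
    have e1 : S * (γ ^ j • (1 : Matrix (Fin d) (Fin d) ℝ)) * S = γ ^ j • A := by
      rw [mul_smul_comm, Matrix.mul_one, smul_mul_assoc, hSm]
    have e2 : S * A ^ j * S = A ^ (j+1) := by
      have hAj : ∀ i : ℕ, A ^ i = S ^ (2*i) := by
        intro i; rw [pow_mul, hSq]
      rw [show S * A ^ j * S = S^1 * A ^ j * S^1 from by rw [pow_one], hAj j, hAj (j+1),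
        ← pow_add, ← pow_add]
      congr 1; ring
    have key : γ ^ (j+1) • (1 : Matrix (Fin d) (Fin d) ℝ) - A ^ (j+1)
        = γ ^ j • (γ • (1 : Matrix (Fin d) (Fin d) ℝ) - A)
          + S * (γ ^ j • (1 : Matrix (Fin d) (Fin d) ℝ) - A ^ j) * S := by
      rw [Matrix.mul_sub, Matrix.sub_mul, e1, e2, smul_sub, smul_smul, ← pow_succ]
      abel
    rw [key]
    have conj := ih.mul_mul_conjTranspose_same S
    rw [hSH.eq] at conj
    exact (psd_smul hAγ (pow_nonneg hγ0 j)).add conj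

end Aux

theorem stmt8 {d n m : ℕ} (A : Matrix (Fin d) (Fin d) ℝ) (γ c : ℝ)
    (hγ0 : 0 ≤ γ) (hγ1 : γ < 1)
    (hA : A.PosSemidef)
    (hAγ : (γ • (1 : Matrix (Fin d) (Fin d) ℝ) - A).PosSemidef)
    (B : Matrix (Fin d) (Fin n) ℝ) (C : Matrix (Fin m) (Fin d) ℝ)
    (D : Matrix (Fin m) (Fin n) ℝ)
    (hB : fnorm B ≤ c) (hC : fnorm C ≤ c) (hD : fnorm D ≤ c) (k : ℕ) :
    blockFrobSq A B C D k
      ≤ (c ^ 4 + 2 * c ^ 2 + Real.sqrt m) ^ 2 * (1 + ∑ j ∈ Finset.range (k + 1), γ ^ (2 * j)) ∧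
    blockFrobSq A B C D k
      ≤ (c ^ 4 + 2 * c ^ 2 + Real.sqrt m) ^ 2 * (1 + 1 / (1 - γ ^ 2)) := by
  set s := Real.sqrt m with hsdef
  set K := c ^ 4 + 2 * c ^ 2 + s with hKdef
  set S := ∑ j ∈ Finset.range (k + 1), γ ^ (2 * j) with hSdef
  set T := ∑ j ∈ Finset.Icc 1 (k - 1), γ ^ (2 * j) with hTdef
  have hc : 0 ≤ c := (fnorm_nonneg B).trans hB
  have hs0 : 0 ≤ s := Real.sqrt_nonneg _
  have hS0 : 0 ≤ S := Finset.sum_nonneg fun j _ => by positivity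
  have hT0 : 0 ≤ T := Finset.sum_nonneg fun j _ => by positivity
  have hTS : 1 + T ≤ S := by
    have h0 : (0:ℕ) ∉ Finset.Icc 1 (k-1) := by simp
    have hsub : insert 0 (Finset.Icc 1 (k-1)) ⊆ Finset.range (k+1) := by
      intro x hx
      simp only [Finset.mem_insert, Finset.mem_Icc, Finset.mem_range] at hx ⊢
      omega
    calc 1 + T = ∑ j ∈ insert 0 (Finset.Icc 1 (k-1)), γ ^ (2*j) := by
          rw [Finset.sum_insert h0]; simp [hTdef]
      _ ≤ S := Finset.sum_le_sum_of_subset_of_nonneg hsub fun i _ _ => by positivity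
  have hγ2 : γ ^ 2 < 1 := by nlinarith
  have hγ2pos : (0:ℝ) < 1 - γ ^ 2 := by linarith
  have hgeo : S ≤ 1 / (1 - γ ^ 2) := by
    have hseq : S = ∑ j ∈ Finset.range (k+1), (γ ^ 2) ^ j := by
      rw [hSdef]; exact Finset.sum_congr rfl fun j _ => pow_mul γ 2 j
    rw [hseq, geom_sum_eq (by nlinarith : γ ^ 2 ≠ 1)]
    have hx : 0 ≤ (γ ^ 2) ^ (k+1) := by positivity
    have heq : ((γ^2)^(k+1) - 1) / (γ^2 - 1) = (1 - (γ^2)^(k+1)) / (1 - γ^2) := by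
      rw [← neg_div_neg_eq]; ring_nf
    rw [heq, div_le_div_iff₀ hγ2pos hγ2pos]
    nlinarith [hx]
  rcases Nat.eq_zero_or_pos m with hm | hm
  · subst hm
    have hz : blockFrobSq A B C D k = 0 := by
      simp [blockFrobSq, fnorm]
    rw [hz]
    constructor
    · exact mul_nonneg (sq_nonneg _) (by linarith)
    · have := le_of_lt (one_div_pos.mpr hγ2pos)
      exact mul_nonneg (sq_nonneg _) (by linarith)
  · -- m ≥ 1
    have hs2 : s ^ 2 = (m:ℝ) := Real.sq_sqrt (Nat.cast_nonneg m)
    have hm1 : (1:ℝ) ≤ (m:ℝ) := by exact_mod_cast hm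
    have hs1 : 1 ≤ s := by nlinarith
    have hfB2 : fnorm B ^ 2 ≤ c ^ 2 := pow_le_pow_left₀ (fnorm_nonneg B) hB 2
    have hfC2 : fnorm C ^ 2 ≤ c ^ 2 := pow_le_pow_left₀ (fnorm_nonneg C) hC 2
    have hIA : ((1 : Matrix (Fin d) (Fin d) ℝ) - A).PosSemidef := by
      have hdec : (1 : Matrix (Fin d) (Fin d) ℝ) - A
          = (1 - γ) • (1 : Matrix (Fin d) (Fin d) ℝ)
            + (γ • (1 : Matrix (Fin d) (Fin d) ℝ) - A) := by
        rw [sub_smul, one_smul]; abel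
      rw [hdec]
      exact (psd_smul Matrix.PosSemidef.one (by linarith)).add hAγ
    -- block 1 bounds
    have blk1 : ∀ j : ℕ, fnorm (C * (A ^ (j+1) - A ^ j) * B) ^ 2 ≤ c ^ 4 * γ ^ (2*j) := by
      intro j
      have hP : (γ ^ j • (1 : Matrix (Fin d) (Fin d) ℝ) - (A ^ (j+1) - A ^ j)).PosSemidef := by
        have hdec : γ ^ j • (1 : Matrix (Fin d) (Fin d) ℝ) - (A ^ (j+1) - A ^ j)
            = γ ^ j • (1 : Matrix (Fin d) (Fin d) ℝ) + (A ^ j - A ^ (j+1)) := by abel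
        rw [hdec]
        exact (psd_smul Matrix.PosSemidef.one (pow_nonneg hγ0 j)).add (psd_sub_pow hA hIA j)
      have hQ : (γ ^ j • (1 : Matrix (Fin d) (Fin d) ℝ) + (A ^ (j+1) - A ^ j)).PosSemidef := by
        have hdec : γ ^ j • (1 : Matrix (Fin d) (Fin d) ℝ) + (A ^ (j+1) - A ^ j)
            = (γ ^ j • (1 : Matrix (Fin d) (Fin d) ℝ) - A ^ j) + A ^ (j+1) := by abel
        rw [hdec]
        exact (psd_geom hA hγ0 hAγ j).add (hA.pow (j+1))
      have h := fnorm_triple hP hQ C B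
      have hpow : (γ ^ j) ^ 2 = γ ^ (2*j) := by rw [← pow_mul, mul_comm]
      have hprod : fnorm C ^ 2 * fnorm B ^ 2 ≤ c ^ 4 := by
        have h := mul_le_mul hfC2 hfB2 (sq_nonneg (fnorm B)) (sq_nonneg c)
        calc fnorm C ^ 2 * fnorm B ^ 2 ≤ c ^ 2 * c ^ 2 := h
          _ = c ^ 4 := by ring
      calc fnorm (C * (A ^ (j+1) - A ^ j) * B) ^ 2
          ≤ (γ ^ j) ^ 2 * (fnorm C ^ 2 * fnorm B ^ 2) := h
        _ ≤ (γ ^ j) ^ 2 * c ^ 4 := by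
            exact mul_le_mul_of_nonneg_left hprod (sq_nonneg _)
        _ = c ^ 4 * γ ^ (2*j) := by rw [hpow]; ring
    -- block 2
    have blk2 : fnorm (C * (A - 1) * B - D) ^ 2 ≤ (c ^ 2 + c) ^ 2 := by
      have hP : ((1:ℝ) • (1 : Matrix (Fin d) (Fin d) ℝ) - (A - 1)).PosSemidef := by
        have hdec : (1:ℝ) • (1 : Matrix (Fin d) (Fin d) ℝ) - (A - 1)
            = ((1 : Matrix (Fin d) (Fin d) ℝ) - A) + 1 := by rw [one_smul]; abel
        rw [hdec]; exact hIA.add Matrix.PosSemidef.one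
      have hQ : ((1:ℝ) • (1 : Matrix (Fin d) (Fin d) ℝ) + (A - 1)).PosSemidef := by
        have hdec : (1:ℝ) • (1 : Matrix (Fin d) (Fin d) ℝ) + (A - 1) = A := by
          rw [one_smul]; abel
        rw [hdec]; exact hA
      have h := fnorm_triple hP hQ C B
      have hfn : fnorm (C * (A - 1) * B) ≤ c ^ 2 := by
        refine le_of_sq_le_sq' (by positivity) ?_ (fnorm_nonneg _)
        calc fnorm (C * (A - 1) * B) ^ 2 ≤ (1:ℝ)^2 * (fnorm C ^ 2 * fnorm B ^ 2) := h
          _ = fnorm C ^ 2 * fnorm B ^ 2 := by ring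
          _ ≤ c ^ 2 * c ^ 2 := mul_le_mul hfC2 hfB2 (sq_nonneg (fnorm B)) (sq_nonneg c)
          _ = (c^2)^2 := by ring
      have htri : fnorm (C * (A - 1) * B - D) ≤ c ^ 2 + c :=
        (fnorm_sub_le _ _).trans (by linarith)
      exact pow_le_pow_left₀ (fnorm_nonneg _) htri 2
    -- block 3
    have blk3 : fnorm (C * B + D) ^ 2 ≤ (c ^ 2 + c) ^ 2 := by
      have hP : ((1:ℝ) • (1 : Matrix (Fin d) (Fin d) ℝ)
          - (1 : Matrix (Fin d) (Fin d) ℝ)).PosSemidef := by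
        have hdec : (1:ℝ) • (1 : Matrix (Fin d) (Fin d) ℝ) - (1 : Matrix (Fin d) (Fin d) ℝ)
            = 0 := by rw [one_smul]; abel
        rw [hdec]; exact Matrix.PosSemidef.zero
      have hQ : ((1:ℝ) • (1 : Matrix (Fin d) (Fin d) ℝ)
          + (1 : Matrix (Fin d) (Fin d) ℝ)).PosSemidef := by
        rw [one_smul]; exact Matrix.PosSemidef.one.add Matrix.PosSemidef.one
      have h := fnorm_triple hP hQ C B
      rw [Matrix.mul_one] at h
      have hfn : fnorm (C * B) ≤ c ^ 2 := by
        refine le_of_sq_le_sq' (by positivity) ?_ (fnorm_nonneg _)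
        calc fnorm (C * B) ^ 2 ≤ (1:ℝ)^2 * (fnorm C ^ 2 * fnorm B ^ 2) := h
          _ = fnorm C ^ 2 * fnorm B ^ 2 := by ring
          _ ≤ c ^ 2 * c ^ 2 := mul_le_mul hfC2 hfB2 (sq_nonneg (fnorm B)) (sq_nonneg c)
          _ = (c^2)^2 := by ring
      have htri : fnorm (C * B + D) ≤ c ^ 2 + c :=
        (fnorm_add_le _ _).trans (by linarith)
      exact pow_le_pow_left₀ (fnorm_nonneg _) htri 2
    -- block 4
    have blk4 : fnorm (1 : Matrix (Fin m) (Fin m) ℝ) ^ 2 = (m:ℝ) := by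
      rw [fnorm_one]; exact Real.sq_sqrt (Nat.cast_nonneg m)
    -- sum bound
    have hsum1 : (∑ j ∈ Finset.Icc 1 (k - 1), fnorm (C * (A ^ (j + 1) - A ^ j) * B) ^ 2)
        ≤ c ^ 4 * T := by
      rw [hTdef, Finset.mul_sum]
      exact Finset.sum_le_sum fun j _ => blk1 j
    have hmain : blockFrobSq A B C D k ≤ c ^ 4 * T + 2 * (c ^ 2 + c) ^ 2 + (m:ℝ) := by
      unfold blockFrobSq
      linarith [hsum1, blk2, blk3, blk4.le]
    have hKc : c ^ 2 ≤ K := by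
      rw [hKdef]
      have h4 : 0 ≤ c ^ 4 := pow_nonneg hc 4
      have h2 : 0 ≤ c ^ 2 := sq_nonneg c
      linarith
    have hK2 : c ^ 4 ≤ K ^ 2 := by
      have h := mul_self_le_mul_self (sq_nonneg c) hKc
      calc c ^ 4 = c ^ 2 * c ^ 2 := by ring
        _ ≤ K * K := h
        _ = K ^ 2 := by ring
    have h2K : 2 * (c ^ 2 + c) ^ 2 + (m:ℝ) ≤ 2 * K ^ 2 := by
      rw [hKdef, ← hs2]
      exact numeric_h2K hc hs1
    have hKS : K ^ 2 * (1 + T) ≤ K ^ 2 * S := mul_le_mul_of_nonneg_left hTS (sq_nonneg K)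
    have hKT : c ^ 4 * T ≤ K ^ 2 * T := mul_le_mul_of_nonneg_right hK2 hT0
    have main1 : blockFrobSq A B C D k ≤ K ^ 2 * (1 + S) := by
      have hexp : K ^ 2 * (1 + T) = K ^ 2 + K ^ 2 * T := by ring
      have hexp2 : K ^ 2 * (1 + S) = K ^ 2 + K ^ 2 * S := by ring
      linarith [hmain, h2K, hKS, hKT]
    refine ⟨main1, main1.trans ?_⟩
    exact mul_le_mul_of_nonneg_left (by linarith) (sq_nonneg K)
end

section
/- For a symmetric d×d real matrix A with 0 ⪯ A ⪯ γ·I, γ ∈ [0,1), and any i ≥ 1, the sharper bound ‖A^i - A^{i-1}‖_op ≤ max(γ^{i-1}(1-γ), ((i-1)/i)^{i-1} · (1/i)) holds; in particular for γ ≥ (i-1)/i the maximum of λ^{i-1}(1-λ) over λ ∈ [0,γ] is attained at λ = (i-1)/i and equals ((i-1)^{i-1})/(i^i). -/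
open Matrix in
private lemma amgm15 (n : ℕ) {l : ℝ} (h0 : 0 ≤ l) (h1 : l ≤ 1) :
    l ^ n * (1 - l) ≤ (n:ℝ)^n / ((n:ℝ)+1)^(n+1) := by
  rcases n with _ | m
  · simp; linarith
  · set N : ℝ := (m:ℝ) + 1 with hN
    have hNpos : 0 < N := by positivity
    have hN1 : 0 < N + 1 := by positivity
    have hp2 : (0:ℝ) ≤ N * (1 - l) := mul_nonneg hNpos.le (by linarith)
    have key := Real.geom_mean_le_arith_mean2_weighted
      (w₁ := N/(N+1)) (w₂ := 1/(N+1)) (p₁ := l) (p₂ := N*(1-l))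
      (by positivity) (by positivity) h0 hp2 (by field_simp)
    have hsum : N/(N+1) * l + 1/(N+1) * (N*(1-l)) = N/(N+1) := by field_simp; ring
    rw [hsum] at key
    have hLnn : (0:ℝ) ≤ l ^ (N/(N+1)) * (N*(1-l)) ^ (1/(N+1)) :=
      mul_nonneg (Real.rpow_nonneg h0 _) (Real.rpow_nonneg hp2 _)
    have key2 := Real.rpow_le_rpow hLnn key hN1.le
    rw [Real.mul_rpow (Real.rpow_nonneg h0 _) (Real.rpow_nonneg hp2 _),
      ← Real.rpow_mul h0, ← Real.rpow_mul hp2,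
      div_mul_cancel₀ _ (ne_of_gt hN1), one_div_mul_cancel (ne_of_gt hN1),
      Real.rpow_one] at key2
    have hc1 : (N : ℝ) = ((m+1 : ℕ) : ℝ) := by push_cast [hN]; ring
    have hc2 : (N + 1 : ℝ) = ((m+2 : ℕ) : ℝ) := by push_cast [hN]; ring
    rw [hc2, hc1, Real.rpow_natCast, Real.rpow_natCast, div_pow] at key2
    rw [← hc1, ← hc2] at key2
    have hfin : l ^ (m+1) * (1-l) * N ≤ N ^ (m+1) / (N+1) ^ (m+2) * N := by
      calc l ^ (m+1) * (1-l) * N = l ^ (m+1) * (N * (1-l)) := by ring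
        _ ≤ N ^ (m+2) / (N+1) ^ (m+2) := key2
        _ = N ^ (m+1) / (N+1) ^ (m+2) * N := by rw [pow_succ]; ring
    have hres := le_of_mul_le_mul_right hfin hNpos
    convert hres using 2 <;> push_cast <;> rfl

open Matrix in
private lemma specbound15 {d n : ℕ} (A : Matrix (Fin d) (Fin d) ℝ)
    (hA : A.PosSemidef) (c : ℝ) (hc : 0 ≤ c)
    (hν : ∀ k, |hA.1.eigenvalues k ^ (n+1) - hA.1.eigenvalues k ^ n| ≤ c)
    (x : Fin d → ℝ) (hx : Real.sqrt (∑ j, x j ^ 2) ≤ 1) :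
    Real.sqrt (∑ j, ((A ^ (n+1) - A ^ n).mulVec x) j ^ 2) ≤ c := by
  set b := hA.1.eigenvectorBasis with hb
  set μ := hA.1.eigenvalues with hμ
  set M := A ^ (n+1) - A ^ n with hM
  set ν : Fin d → ℝ := fun k => μ k ^ (n+1) - μ k ^ n with hν'
  have hνa : ∀ k, |ν k| ≤ c := hν
  have hpow : ∀ (m : ℕ) k, (A ^ m) *ᵥ ⇑(b k) = μ k ^ m • ⇑(b k) := by
    intro m k
    induction m with
    | zero => simp
    | succ m ih =>
      rw [pow_succ, ← Matrix.mulVec_mulVec, hA.1.mulVec_eigenvectorBasis,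
        Matrix.mulVec_smul, ih, smul_smul, pow_succ]
      ring_nf
      rfl
  have hMv : ∀ k, M *ᵥ ⇑(b k) = ν k • ⇑(b k) := by
    intro k
    rw [hM, Matrix.sub_mulVec, hpow, hpow, ← sub_smul]
  set y : EuclideanSpace ℝ (Fin d) := (WithLp.equiv 2 (Fin d → ℝ)).symm x with hy
  set T := Matrix.toEuclideanLin M with hT
  have hTb : ∀ k, T (b k) = ν k • b k := by
    intro k
    rw [hT, Matrix.toEuclideanLin_apply]
    have h : (WithLp.equiv 2 (Fin d → ℝ)) (b k) = ⇑(b k) := rfl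
    rw [hMv, WithLp.toLp_smul]
  have hrep : ∀ (z : EuclideanSpace ℝ (Fin d)) k, b.repr (T z) k = ν k * b.repr z k := by
    intro z k
    conv_lhs => rw [← b.sum_repr z]
    rw [map_sum]
    simp_rw [_root_.map_smul, hTb, smul_smul]
    rw [b.repr_apply_apply, b.orthonormal.inner_right_fintype]
    ring
  have hnrm : ∀ (w : EuclideanSpace ℝ (Fin d)), ‖w‖ = Real.sqrt (∑ j, (b.repr w j) ^ 2) := by
    intro w
    rw [← b.repr.norm_map w, EuclideanSpace.norm_eq]
    congr 1
    exact Finset.sum_congr rfl fun j _ => by rw [Real.norm_eq_abs, sq_abs]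
  have hTy : ‖T y‖ ≤ c * ‖y‖ := by
    rw [hnrm (T y), hnrm y]
    rw [show c * Real.sqrt (∑ j, (b.repr y j)^2) = Real.sqrt (c^2 * ∑ j, (b.repr y j)^2) by
      rw [Real.sqrt_mul (by positivity), Real.sqrt_sq hc]]
    apply Real.sqrt_le_sqrt
    rw [Finset.mul_sum]
    apply Finset.sum_le_sum
    intro j _
    rw [hrep, mul_pow]
    have h2 : ν j ^ 2 ≤ c ^ 2 :=
      sq_le_sq' (by linarith [(abs_le.1 (hνa j)).1]) (abs_le.1 (hνa j)).2
    nlinarith [sq_nonneg (b.repr y j)]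
  have hyn : ‖y‖ = Real.sqrt (∑ j, x j ^ 2) := by
    rw [EuclideanSpace.norm_eq]
    congr 1
    exact Finset.sum_congr rfl fun j _ => by rw [Real.norm_eq_abs, sq_abs]; rfl
  have hTyv : T y = (WithLp.equiv 2 (Fin d → ℝ)).symm (M *ᵥ x) := by
    rw [hT, Matrix.toEuclideanLin_apply, hy]
    congr 1
  have hfin : Real.sqrt (∑ j, ((M.mulVec x) j)^2) = ‖T y‖ := by
    rw [hTyv, EuclideanSpace.norm_eq]
    congr 1
    exact Finset.sum_congr rfl fun j _ => by rw [Real.norm_eq_abs, sq_abs]; rfl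
  rw [hfin]
  calc ‖T y‖ ≤ c * ‖y‖ := hTy
    _ ≤ c * 1 := by rw [hyn]; exact mul_le_mul_of_nonneg_left hx hc
    _ = c := mul_one c

open Matrix in
private lemma eigle15 {d : ℕ} (A : Matrix (Fin d) (Fin d) ℝ) (γ : ℝ)
    (hA : A.PosSemidef)
    (hAγ : (γ • (1 : Matrix (Fin d) (Fin d) ℝ) - A).PosSemidef) :
    ∀ k, hA.1.eigenvalues k ≤ γ := by
  intro k
  set b := hA.1.eigenvectorBasis with hb
  set μ := hA.1.eigenvalues with hμ
  have hv := hA.1.mulVec_eigenvectorBasis k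
  have h2 := hAγ.dotProduct_mulVec_nonneg ⇑(b k)
  rw [Matrix.sub_mulVec, Matrix.smul_mulVec, Matrix.one_mulVec, hv] at h2
  have hnorm : ⇑(b k) ⬝ᵥ ⇑(b k) = 1 := by
    have h1 := b.orthonormal.1 k
    have h3 : (inner ℝ (b k) (b k) : ℝ) = ⇑(b k) ⬝ᵥ ⇑(b k) :=
      EuclideanSpace.inner_eq_star_dotProduct _ _
    rw [← h3, real_inner_self_eq_norm_sq, h1]; norm_num
  simp only [star_trivial, dotProduct_sub, dotProduct_smul, hnorm] at h2
  simp at h2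
  rw [← hb, hnorm, ← hμ] at h2
  linarith

noncomputable def vnorm {n : ℕ} (v : Fin n → ℝ) : ℝ := Real.sqrt (∑ i, v i ^ 2)

noncomputable def opNorm {m n : ℕ} (M : Matrix (Fin m) (Fin n) ℝ) : ℝ :=
  sSup {r : ℝ | ∃ x : Fin n → ℝ, vnorm x ≤ 1 ∧ r = vnorm (M.mulVec x)}

theorem stmt15 {d : ℕ} (A : Matrix (Fin d) (Fin d) ℝ) (γ : ℝ)
    (hγ0 : 0 ≤ γ) (hγ1 : γ < 1)
    (hA : A.PosSemidef)
    (hAγ : (γ • (1 : Matrix (Fin d) (Fin d) ℝ) - A).PosSemidef)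
    (i : ℕ) (hi : 1 ≤ i) :
    opNorm (A ^ i - A ^ (i - 1))
      ≤ max (γ ^ (i - 1) * (1 - γ)) ((((i : ℝ) - 1) / i) ^ (i - 1) * (1 / i)) ∧
    (γ ≥ ((i : ℝ) - 1) / i →
      IsGreatest ((fun l : ℝ => l ^ (i - 1) * (1 - l)) '' Set.Icc (0 : ℝ) γ)
        (((i : ℝ) - 1) ^ (i - 1) / (i : ℝ) ^ i)) := by
  obtain ⟨n, rfl⟩ : ∃ n, i = n + 1 := ⟨i - 1, (Nat.succ_pred_eq_of_pos hi).symm⟩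
  simp only [Nat.add_sub_cancel]
  set v : ℝ := (n:ℝ)^n / ((n:ℝ)+1)^(n+1) with hv
  have hv0 : 0 ≤ v := by positivity
  have hsecond : ((((n+1:ℕ)):ℝ) - 1) / ((n+1:ℕ):ℝ) ^ (1:ℕ) = (n:ℝ)/((n:ℝ)+1) := by
    push_cast; ring
  have hterm : (((((n+1:ℕ)):ℝ) - 1) / ((n+1:ℕ):ℝ)) ^ n * (1 / ((n+1:ℕ):ℝ)) = v := by
    push_cast
    rw [show ((n:ℝ) + 1 - 1) = (n:ℝ) by ring, div_pow, hv, pow_succ,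
      div_mul_div_comm, mul_one]
  set c : ℝ := max (γ ^ n * (1 - γ)) ((((((n+1:ℕ)):ℝ) - 1) / ((n+1:ℕ):ℝ)) ^ n * (1 / ((n+1:ℕ):ℝ)))
    with hc
  have hvc : v ≤ c := hterm ▸ le_max_right _ _
  have hc0 : 0 ≤ c := le_trans hv0 hvc
  have hub : ∀ l : ℝ, 0 ≤ l → l ≤ γ → l ^ n * (1 - l) ≤ v :=
    fun l h0 hγ => amgm15 n h0 (le_of_lt (lt_of_le_of_lt hγ hγ1))
  have hμ0 := hA.eigenvalues_nonneg
  have hμγ := eigle15 A γ hA hAγ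
  constructor
  · apply Real.sSup_le _ hc0
    rintro r ⟨x, hx, rfl⟩
    apply specbound15 A hA c hc0 _ x hx
    intro k
    set μ := hA.1.eigenvalues k with hμ
    have h0 := hμ0 k
    have hγk := hμγ k
    have h1 : μ ≤ 1 := le_of_lt (lt_of_le_of_lt hγk hγ1)
    have habs : |μ ^ (n+1) - μ ^ n| = μ ^ n * (1 - μ) := by
      have hle : μ ^ (n+1) ≤ μ ^ n := pow_le_pow_of_le_one h0 h1 (by omega)
      rw [abs_of_nonpos (by linarith)]
      rw [pow_succ]; ring
    rw [habs]
    exact le_trans (hub μ h0 hγk) hvc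
  · intro hγ2
    have hγ2' : (n:ℝ)/((n:ℝ)+1) ≤ γ := by
      push_cast at hγ2
      calc (n:ℝ)/((n:ℝ)+1) = ((n:ℝ)+1-1)/((n:ℝ)+1) := by ring_nf
        _ ≤ γ := hγ2
    have hval : ((((n+1:ℕ)):ℝ) - 1) ^ n / ((n+1:ℕ):ℝ) ^ (n+1) = v := by
      push_cast
      rw [show ((n:ℝ) + 1 - 1) = (n:ℝ) by ring, hv]
    rw [hval]
    constructor
    · refine ⟨(n:ℝ)/((n:ℝ)+1), ⟨by positivity, hγ2'⟩, ?_⟩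
      have hne : ((n:ℝ)+1) ≠ 0 := by positivity
      simp only
      rw [show (1:ℝ) - (n:ℝ)/((n:ℝ)+1) = 1/((n:ℝ)+1) by field_simp; ring, div_pow, hv, pow_succ,
        div_mul_div_comm, mul_one]
    · rintro r ⟨l, hl, rfl⟩
      exact hub l hl.1 hl.2
end
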